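/- Let Ω ⊆ ℝⁿ be open and let Φ : Ω → ℝ be smooth with positive definite Hessian at every point; let g = Hess Φ be the associated Hessian metric. Define the Christoffel symbols Γ^m_{ij} = (1/2) Σ_l Φ^{ml} Φ_{ijl} (where Φ^{ml} are the entries of g⁻¹ and Φ_{ijl} the third partials of Φ), and define the curvature tensor R^m_{jkl} = ∂_k Γ^m_{lj} − ∂_l Γ^m_{kj} + Σ_p ( Γ^m_{kp} Γ^p_{lj} − Γ^m_{lp} Γ^p_{kj} ). Then R^m_{jkl} vanishes identically on Ω if and only if Φ satisfies the WDVV equations Σ_{p,q} Φ^{pq} Φ_{jlp} Φ_{ikq} = Σ_{p,q} Φ^{pq} Φ_{ilp} Φ_{jkq} for all indices i,j,k,l at every point of Ω. -/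

import Mathlib

open Real Matrix

/-- Partial derivative of `f : ℝⁿ → ℝ` in the `i`-th coordinate direction. -/
noncomputable def pd {n : ℕ} (i : Fin n) (f : (Fin n → ℝ) → ℝ) : (Fin n → ℝ) → ℝ :=
  fun x => fderiv ℝ f x (Pi.single i 1)

/-- Hessian matrix of second partial derivatives of `f : ℝⁿ → ℝ`. -/
noncomputable def hessian {n : ℕ} (f : (Fin n → ℝ) → ℝ) (x : Fin n → ℝ) :
    Matrix (Fin n) (Fin n) ℝ :=
  Matrix.of fun i j => pd i (pd j f) x

/-- Third partial derivatives `Φ_{ijk}` of `f : ℝⁿ → ℝ`. -/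
noncomputable def pd3 {n : ℕ} (f : (Fin n → ℝ) → ℝ) (i j k : Fin n) (x : Fin n → ℝ) : ℝ :=
  pd i (pd j (pd k f)) x

/-- Christoffel symbols `Γ^m_{ij} = (1/2) Σ_l Φ^{ml} Φ_{ijl}` of the Hessian metric
`g = Hess Φ` in the affine coordinates. -/
noncomputable def christoffel {n : ℕ} (Φ : (Fin n → ℝ) → ℝ) (m i j : Fin n) :
    (Fin n → ℝ) → ℝ :=
  fun x => (1 / 2) * ∑ l : Fin n, (hessian Φ x)⁻¹ m l * pd3 Φ i j l x

/-- The Riemann curvature tensor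
`R^m_{jkl} = ∂_k Γ^m_{lj} - ∂_l Γ^m_{kj} + Σ_p (Γ^m_{kp} Γ^p_{lj} - Γ^m_{lp} Γ^p_{kj})`
of the Hessian metric `g = Hess Φ`. -/
noncomputable def riemann {n : ℕ} (Φ : (Fin n → ℝ) → ℝ) (m j k l : Fin n)
    (x : Fin n → ℝ) : ℝ :=
  pd k (christoffel Φ m l j) x - pd l (christoffel Φ m k j) x +
    ∑ p : Fin n, (christoffel Φ m k p x * christoffel Φ p l j x -
      christoffel Φ m l p x * christoffel Φ p k j x)

namespace WDVVAux

open Filter Topology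

variable {n : ℕ}

/-! ### Generalities about `pd` -/

lemma pd_congr {i : Fin n} {f g : (Fin n → ℝ) → ℝ} {x} (h : f =ᶠ[nhds x] g) :
    pd i f x = pd i g x := by
  unfold pd; rw [h.fderiv_eq]

lemma contDiffOn_pd {Ω : Set (Fin n → ℝ)} (hΩ : IsOpen Ω) {f} (hf : ContDiffOn ℝ (⊤ : ℕ∞) f Ω)
    (i : Fin n) : ContDiffOn ℝ (⊤ : ℕ∞) (pd i f) Ω :=
  (hf.fderiv_of_isOpen hΩ (by simp)).clm_apply contDiffOn_const

lemma diffAt {E F : Type*} [NormedAddCommGroup E] [NormedSpace ℝ E] [NormedAddCommGroup F]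
    [NormedSpace ℝ F] {Ω : Set E} (hΩ : IsOpen Ω) {f : E → F} {x : E}
    (hf : ContDiffOn ℝ (⊤ : ℕ∞) f Ω) (hx : x ∈ Ω) : DifferentiableAt ℝ f x :=
  (hf.contDiffAt (hΩ.mem_nhds hx)).differentiableAt (by simp)

lemma pd_pd_comm {Ω : Set (Fin n → ℝ)} (hΩ : IsOpen Ω) {f x} (hf : ContDiffOn ℝ (⊤ : ℕ∞) f Ω)
    (hx : x ∈ Ω) (i j : Fin n) : pd i (pd j f) x = pd j (pd i f) x := by
  have hd : ContDiffOn ℝ (⊤ : ℕ∞) (fderiv ℝ f) Ω := hf.fderiv_of_isOpen hΩ (by simp)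
  have hev : ∀ᶠ y in nhds x, HasFDerivAt f (fderiv ℝ f y) y := by
    filter_upwards [hΩ.mem_nhds hx] with y hy using (diffAt hΩ hf hy).hasFDerivAt
  have h2 : HasFDerivAt (fderiv ℝ f) (fderiv ℝ (fderiv ℝ f) x) x :=
    (diffAt hΩ hd hx).hasFDerivAt
  have hsym := second_derivative_symmetric_of_eventually hev h2 (Pi.single j 1) (Pi.single i 1)
  have key : ∀ a b : Fin n, pd a (pd b f) x
      = fderiv ℝ (fderiv ℝ f) x (Pi.single a 1) (Pi.single b 1) := by
    intro a b
    show fderiv ℝ (fun y => fderiv ℝ f y (Pi.single b 1)) x (Pi.single a 1) = _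
    rw [fderiv_clm_apply (diffAt hΩ hd hx) (differentiableAt_const _)]
    simp
  rw [key, key]
  exact hsym.symm

lemma pd_mul {k : Fin n} {f g : (Fin n → ℝ) → ℝ} {x} (hf : DifferentiableAt ℝ f x)
    (hg : DifferentiableAt ℝ g x) :
    pd k (fun y => f y * g y) x = pd k f x * g x + f x * pd k g x := by
  unfold pd
  rw [fderiv_fun_mul hf hg]
  simp only [ContinuousLinearMap.add_apply, ContinuousLinearMap.smul_apply, smul_eq_mul]
  ring

lemma pd_const_mul {k : Fin n} (c : ℝ) {f : (Fin n → ℝ) → ℝ} {x} (hf : DifferentiableAt ℝ f x) :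
    pd k (fun y => c * f y) x = c * pd k f x := by
  unfold pd
  rw [fderiv_const_mul hf]
  simp

lemma pd_sum {k : Fin n} {ι : Type*} (s : Finset ι) {f : ι → (Fin n → ℝ) → ℝ} {x}
    (hf : ∀ a ∈ s, DifferentiableAt ℝ (f a) x) :
    pd k (fun y => ∑ a ∈ s, f a y) x = ∑ a ∈ s, pd k (f a) x := by
  unfold pd
  rw [fderiv_fun_sum hf]
  simp

/-! ### Derivative of the inverse Hessian -/

attribute [local instance] Matrix.linftyOpNormedRing Matrix.linftyOpNormedAlgebra

lemma inv_entry_deriv {Ω : Set (Fin n → ℝ)} (hΩ : IsOpen Ω) {Φ : (Fin n → ℝ) → ℝ}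
    (hΦ : ContDiffOn ℝ (⊤ : ℕ∞) Φ Ω) {x : Fin n → ℝ} (hx : x ∈ Ω)
    (hpos : (hessian Φ x).PosDef) (m a : Fin n) :
    DifferentiableAt ℝ (fun y => (hessian Φ y)⁻¹ m a) x ∧
    ∀ k, pd k (fun y => (hessian Φ y)⁻¹ m a) x
      = - ∑ c, ∑ b, (hessian Φ x)⁻¹ m b * pd3 Φ k b c x * (hessian Φ x)⁻¹ c a := by
  classical
  let ℓ : (Fin n → Fin n → ℝ) →ₗ[ℝ] Matrix (Fin n) (Fin n) ℝ :=
    { toFun := Matrix.of, map_add' := fun _ _ => rfl, map_smul' := fun _ _ => rfl }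
  let ι : (Fin n → Fin n → ℝ) →L[ℝ] Matrix (Fin n) (Fin n) ℝ := ℓ.toContinuousLinearMap
  let F' : (Fin n → ℝ) →L[ℝ] (Fin n → Fin n → ℝ) :=
    ContinuousLinearMap.pi (fun i => ContinuousLinearMap.pi
      (fun j => fderiv ℝ (pd i (pd j Φ)) x))
  have hF : HasFDerivAt (fun y (i j : Fin n) => pd i (pd j Φ) y) F' x :=
    hasFDerivAt_pi.2 fun i => hasFDerivAt_pi.2 fun j =>
      (diffAt hΩ (contDiffOn_pd hΩ (contDiffOn_pd hΩ hΦ j) i) hx).hasFDerivAt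
  have hM : HasFDerivAt (hessian Φ) (ι.comp F') x := ι.hasFDerivAt.comp x hF
  have hdet : IsUnit (hessian Φ x).det := isUnit_iff_ne_zero.2 hpos.det_pos.ne'
  have hu : IsUnit (hessian Φ x) := (Matrix.isUnit_iff_isUnit_det _).2 hdet
  obtain ⟨u, hu'⟩ := hu
  have hinv : HasFDerivAt (Ring.inverse : Matrix (Fin n) (Fin n) ℝ → _)
      (-(ContinuousLinearMap.mulLeftRight ℝ _ ↑u⁻¹ ↑u⁻¹)) (hessian Φ x) := by
    rw [← hu']; exact hasFDerivAt_ringInverse u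
  have hcomp : HasFDerivAt (fun y => Ring.inverse (hessian Φ y))
      ((-(ContinuousLinearMap.mulLeftRight ℝ _ ↑u⁻¹ ↑u⁻¹)).comp (ι.comp F')) x :=
    hinv.comp x hM
  let ε : Matrix (Fin n) (Fin n) ℝ →L[ℝ] ℝ :=
    (Matrix.entryLinearMap ℝ ℝ m a).toContinuousLinearMap
  have hent : HasFDerivAt (fun y => (Ring.inverse (hessian Φ y)) m a)
      (ε.comp ((-(ContinuousLinearMap.mulLeftRight ℝ _ ↑u⁻¹ ↑u⁻¹)).comp (ι.comp F'))) x :=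
    ε.hasFDerivAt.comp x hcomp
  have hfun : (fun y => (hessian Φ y)⁻¹ m a)
      = fun y => (Ring.inverse (hessian Φ y)) m a := by
    funext y; rw [Matrix.nonsing_inv_eq_ringInverse]
  have huinv : ((↑u⁻¹ : Matrix (Fin n) (Fin n) ℝ)) = (hessian Φ x)⁻¹ := by
    rw [Matrix.coe_units_inv, hu']
  constructor
  · rw [hfun]; exact hent.differentiableAt
  · intro k
    rw [show pd k (fun y => (hessian Φ y)⁻¹ m a) x
        = pd k (fun y => (Ring.inverse (hessian Φ y)) m a) x from by rw [hfun]]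
    unfold pd
    rw [hent.fderiv]
    have : (ι (F' (Pi.single k 1))) = Matrix.of (fun i j => pd3 Φ k i j x) := by
      ext i j
      simp [ι, ℓ, F', pd3, pd]
      rfl
    simp only [ContinuousLinearMap.comp_apply, ContinuousLinearMap.neg_apply,
      ContinuousLinearMap.mulLeftRight_apply, this, huinv]
    have hε : ∀ A : Matrix (Fin n) (Fin n) ℝ, ε A = A m a := fun A => rfl
    show ε (-(ContinuousLinearMap.mulLeftRight ℝ _ (hessian Φ x)⁻¹ (hessian Φ x)⁻¹)
      (ι (F' (Pi.single k 1)))) = _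
    simp only [ContinuousLinearMap.neg_apply, ContinuousLinearMap.mulLeftRight_apply, this]
    rw [hε]
    rw [Matrix.neg_apply]
    congr 1
    rw [Matrix.mul_apply]
    refine Finset.sum_congr rfl fun c _ => ?_
    rw [Matrix.mul_apply, Finset.sum_mul]
    exact Finset.sum_congr rfl fun b _ => by simp [mul_assoc]

/-! ### The purely algebraic computation -/

lemma sum3_rev {N : ℕ} (f : Fin N → Fin N → Fin N → ℝ) :
    ∑ a : Fin N, ∑ b : Fin N, ∑ c : Fin N, f a b c
      = ∑ c : Fin N, ∑ b : Fin N, ∑ a : Fin N, f a b c := by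
  have h1 : ∑ a : Fin N, ∑ b : Fin N, ∑ c : Fin N, f a b c
      = ∑ a : Fin N, ∑ c : Fin N, ∑ b : Fin N, f a b c :=
    Finset.sum_congr rfl fun a _ => Finset.sum_comm
  have h2 : ∑ a : Fin N, ∑ c : Fin N, ∑ b : Fin N, f a b c
      = ∑ c : Fin N, ∑ a : Fin N, ∑ b : Fin N, f a b c := Finset.sum_comm
  have h3 : ∑ c : Fin N, ∑ a : Fin N, ∑ b : Fin N, f a b c
      = ∑ c : Fin N, ∑ b : Fin N, ∑ a : Fin N, f a b c :=
    Finset.sum_congr rfl fun c _ => Finset.sum_comm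
  rw [h1, h2, h3]

lemma key_algebra {N : ℕ} (H : Fin N → Fin N → ℝ) (P : Fin N → Fin N → Fin N → ℝ)
    (Q : Fin N → ℝ)
    (hH : ∀ a b, H a b = H b a)
    (hP1 : ∀ a b c, P a b c = P b a c)
    (hP2 : ∀ a b c, P a b c = P a c b)
    (m j k l : Fin N) :
    (1/2:ℝ) * (∑ a, ((-∑ c, ∑ b, H m b * P k b c * H c a) * P l j a + H m a * Q a))
      - (1/2:ℝ) * (∑ a, ((-∑ c, ∑ b, H m b * P l b c * H c a) * P k j a + H m a * Q a))
      + (∑ p, (((1/2:ℝ) * ∑ a, H m a * P k p a) * ((1/2:ℝ) * ∑ a, H p a * P l j a)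
          - ((1/2:ℝ) * ∑ a, H m a * P l p a) * ((1/2:ℝ) * ∑ a, H p a * P k j a)))
      = (1/4:ℝ) * ∑ a, H m a *
          ((∑ p, ∑ q, H p q * P j k p * P a l q)
            - (∑ p, ∑ q, H p q * P j l p * P a k q)) := by
  set S1 := ∑ a : Fin N, ∑ b : Fin N, ∑ c : Fin N, H m a * H b c * P k a b * P l j c with hS1
  set S2 := ∑ a : Fin N, ∑ b : Fin N, ∑ c : Fin N, H m a * H b c * P l a b * P k j c with hS2
  have flatten : ∀ u v : Fin N,
      (∑ a, (-∑ c, ∑ b, H m b * P u b c * H c a) * P v j a)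
        = -∑ a, ∑ c, ∑ b, H m b * P u b c * H c a * P v j a := by
    intro u v
    rw [← Finset.sum_neg_distrib]
    refine Finset.sum_congr rfl fun a _ => ?_
    rw [neg_mul, Finset.sum_mul]
    congr 1
    exact Finset.sum_congr rfl fun c _ => Finset.sum_mul _ _ _
  have h1 : (∑ a, (-∑ c, ∑ b, H m b * P k b c * H c a) * P l j a) = -S1 := by
    rw [flatten k l, neg_inj, sum3_rev (fun a c b => H m b * P k b c * H c a * P l j a)]
    exact Finset.sum_congr rfl fun b _ => Finset.sum_congr rfl fun c _ =>
      Finset.sum_congr rfl fun a _ => by ring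
  have h2 : (∑ a, (-∑ c, ∑ b, H m b * P l b c * H c a) * P k j a) = -S2 := by
    rw [flatten l k, neg_inj, sum3_rev (fun a c b => H m b * P l b c * H c a * P k j a)]
    exact Finset.sum_congr rfl fun b _ => Finset.sum_congr rfl fun c _ =>
      Finset.sum_congr rfl fun a _ => by ring
  have quad : ∀ u v : Fin N,
      (∑ p, ((1/2:ℝ) * ∑ a, H m a * P u p a) * ((1/2:ℝ) * ∑ a, H p a * P v j a))
        = (1/4:ℝ) * ∑ a, ∑ b, ∑ c, H m a * P u b a * H b c * P v j c := by
    intro u v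
    have e : ∀ p, ((1/2:ℝ) * ∑ a, H m a * P u p a) * ((1/2:ℝ) * ∑ a, H p a * P v j a)
        = (1/4:ℝ) * ∑ a, ∑ c, H m a * P u p a * (H p c * P v j c) := by
      intro p
      rw [show ((1/2:ℝ) * ∑ a, H m a * P u p a) * ((1/2:ℝ) * ∑ a, H p a * P v j a)
          = (1/4:ℝ) * ((∑ a, H m a * P u p a) * (∑ a, H p a * P v j a)) from by ring,
        Finset.sum_mul_sum]
    rw [Finset.sum_congr rfl fun p _ => e p, ← Finset.mul_sum]
    congr 1
    rw [Finset.sum_comm]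
    exact Finset.sum_congr rfl fun _ _ => Finset.sum_congr rfl fun _ _ =>
      Finset.sum_congr rfl fun _ _ => by ring
  have h3 : (∑ p, ((1/2:ℝ) * ∑ a, H m a * P k p a) * ((1/2:ℝ) * ∑ a, H p a * P l j a))
      = (1/4:ℝ) * S1 := by
    rw [quad k l, hS1]
    congr 1
    refine Finset.sum_congr rfl fun a _ => Finset.sum_congr rfl fun b _ =>
      Finset.sum_congr rfl fun c _ => ?_
    rw [hP2 k b a]; ring
  have h4 : (∑ p, ((1/2:ℝ) * ∑ a, H m a * P l p a) * ((1/2:ℝ) * ∑ a, H p a * P k j a))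
      = (1/4:ℝ) * S2 := by
    rw [quad l k, hS2]
    congr 1
    refine Finset.sum_congr rfl fun a _ => Finset.sum_congr rfl fun b _ =>
      Finset.sum_congr rfl fun c _ => ?_
    rw [hP2 l b a]; ring
  have hR : ∀ u v : Fin N,
      (∑ a, H m a * ∑ p, ∑ q, H p q * P j u p * P a v q)
        = ∑ a, ∑ b, ∑ c, H m a * H b c * P v a b * P u j c := by
    intro u v
    refine Finset.sum_congr rfl fun a _ => ?_
    rw [Finset.mul_sum, Finset.sum_comm]
    refine Finset.sum_congr rfl fun b _ => ?_
    rw [Finset.mul_sum]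
    refine Finset.sum_congr rfl fun c _ => ?_
    rw [hP1 j u b, hP1 a v c, hH b c]
    ring
  rw [Finset.sum_add_distrib, Finset.sum_add_distrib, Finset.sum_sub_distrib, h1, h2, h3, h4]
  have hRHS : (∑ a, H m a * ((∑ p, ∑ q, H p q * P j k p * P a l q)
      - (∑ p, ∑ q, H p q * P j l p * P a k q))) = S2 - S1 := by
    rw [show (∑ a, H m a * ((∑ p, ∑ q, H p q * P j k p * P a l q)
        - (∑ p, ∑ q, H p q * P j l p * P a k q)))
      = (∑ a, (H m a * ∑ p, ∑ q, H p q * P j k p * P a l q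
          - H m a * ∑ p, ∑ q, H p q * P j l p * P a k q)) from
        Finset.sum_congr rfl fun a _ => mul_sub _ _ _,
      Finset.sum_sub_distrib, hR k l, hR l k, hS1, hS2]
  rw [hRHS]
  ring

/-! ### Symmetries at a point -/

section Symm

variable {Ω : Set (Fin n → ℝ)} (hΩ : IsOpen Ω) {Φ : (Fin n → ℝ) → ℝ}
  (hΦ : ContDiffOn ℝ (⊤ : ℕ∞) Φ Ω) {x : Fin n → ℝ} (hx : x ∈ Ω)

include hΩ hΦ hx

lemma pd3_symm12 (a b c : Fin n) : pd3 Φ a b c x = pd3 Φ b a c x :=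
  pd_pd_comm hΩ (contDiffOn_pd hΩ hΦ c) hx a b

lemma pd3_symm23 (a b c : Fin n) : pd3 Φ a b c x = pd3 Φ a c b x := by
  have h : pd b (pd c Φ) =ᶠ[nhds x] pd c (pd b Φ) := by
    filter_upwards [hΩ.mem_nhds hx] with y hy using pd_pd_comm hΩ hΦ hy b c
  exact pd_congr h

lemma hessian_symm : (hessian Φ x)ᵀ = hessian Φ x := by
  ext a b
  show hessian Φ x b a = hessian Φ x a b
  exact pd_pd_comm hΩ hΦ hx b a

lemma inv_hessian_symm (a b : Fin n) : (hessian Φ x)⁻¹ a b = (hessian Φ x)⁻¹ b a := by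
  have h : ((hessian Φ x)⁻¹)ᵀ = (hessian Φ x)⁻¹ := by
    rw [Matrix.transpose_nonsing_inv, hessian_symm hΩ hΦ hx]
  conv_lhs => rw [← h]
  rfl

lemma pd_christoffel (hpos : (hessian Φ x).PosDef) (κ m i j : Fin n) :
    pd κ (christoffel Φ m i j) x
      = (1/2) * ∑ a, (pd κ (fun y => (hessian Φ y)⁻¹ m a) x * pd3 Φ i j a x
          + (hessian Φ x)⁻¹ m a * pd κ (pd3 Φ i j a) x) := by
  have hinv : ∀ a, DifferentiableAt ℝ (fun y => (hessian Φ y)⁻¹ m a) x :=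
    fun a => (inv_entry_deriv hΩ hΦ hx hpos m a).1
  have hp3 : ∀ u v w : Fin n, DifferentiableAt ℝ (pd3 Φ u v w) x := fun u v w =>
    diffAt hΩ (contDiffOn_pd hΩ (contDiffOn_pd hΩ (contDiffOn_pd hΩ hΦ w) v) u) hx
  have hprod : ∀ a : Fin n, DifferentiableAt ℝ
      (fun y => (hessian Φ y)⁻¹ m a * pd3 Φ i j a y) x :=
    fun a => (hinv a).mul (hp3 i j a)
  show pd κ (fun y => (1/2) * ∑ a, (hessian Φ y)⁻¹ m a * pd3 Φ i j a y) x = _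
  rw [pd_const_mul _ (DifferentiableAt.fun_sum fun a _ => hprod a),
    pd_sum Finset.univ (fun a _ => hprod a)]
  congr 1
  refine Finset.sum_congr rfl fun a _ => ?_
  exact pd_mul (hinv a) (hp3 i j a)

lemma riemann_eq (hpos : (hessian Φ x).PosDef) (m j k l : Fin n) :
    riemann Φ m j k l x = (1/4) * ∑ a, (hessian Φ x)⁻¹ m a *
      ((∑ p, ∑ q, (hessian Φ x)⁻¹ p q * pd3 Φ j k p x * pd3 Φ a l q x)
        - (∑ p, ∑ q, (hessian Φ x)⁻¹ p q * pd3 Φ j l p x * pd3 Φ a k q x)) := by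
  have hH : ∀ a b, (hessian Φ x)⁻¹ a b = (hessian Φ x)⁻¹ b a :=
    inv_hessian_symm hΩ hΦ hx
  have hP1 : ∀ a b c, pd3 Φ a b c x = pd3 Φ b a c x := pd3_symm12 hΩ hΦ hx
  have hP2 : ∀ a b c, pd3 Φ a b c x = pd3 Φ a c b x := pd3_symm23 hΩ hΦ hx
  have hQ : ∀ a, pd k (pd3 Φ l j a) x = pd l (pd3 Φ k j a) x := fun a =>
    pd_pd_comm hΩ (contDiffOn_pd hΩ (contDiffOn_pd hΩ hΦ a) j) hx k l
  have hI : ∀ (κ a : Fin n), pd κ (fun y => (hessian Φ y)⁻¹ m a) x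
      = - ∑ c, ∑ b, (hessian Φ x)⁻¹ m b * pd3 Φ κ b c x * (hessian Φ x)⁻¹ c a :=
    fun κ a => (inv_entry_deriv hΩ hΦ hx hpos m a).2 κ
  rw [riemann, pd_christoffel hΩ hΦ hx hpos k m l j, pd_christoffel hΩ hΦ hx hpos l m k j]
  simp only [hI, hQ, christoffel]
  exact key_algebra (fun a b => (hessian Φ x)⁻¹ a b) (fun a b c => pd3 Φ a b c x)
    (fun a => pd l (pd3 Φ k j a) x) hH hP1 hP2 m j k l

end Symm

end WDVVAux

/-- The Hessian metric of a convex potential is flat if and only if the potential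
satisfies the WDVV equations. -/
theorem riemann_flat_iff_wdvv {n : ℕ} (Ω : Set (Fin n → ℝ)) (hΩ : IsOpen Ω)
    (Φ : (Fin n → ℝ) → ℝ) (hΦ : ContDiffOn ℝ (⊤ : ℕ∞) Φ Ω)
    (hpos : ∀ x ∈ Ω, (hessian Φ x).PosDef) :
    (∀ x ∈ Ω, ∀ m j k l : Fin n, riemann Φ m j k l x = 0) ↔
    (∀ x ∈ Ω, ∀ i j k l : Fin n,
      ∑ p : Fin n, ∑ q : Fin n,
        (hessian Φ x)⁻¹ p q * pd3 Φ j l p x * pd3 Φ i k q x =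
      ∑ p : Fin n, ∑ q : Fin n,
        (hessian Φ x)⁻¹ p q * pd3 Φ i l p x * pd3 Φ j k q x) := by
  classical
  have hH : ∀ x ∈ Ω, ∀ a b, (hessian Φ x)⁻¹ a b = (hessian Φ x)⁻¹ b a :=
    fun x hx => WDVVAux.inv_hessian_symm hΩ hΦ hx
  have hswap : ∀ x ∈ Ω, ∀ A B : Fin n → ℝ,
      ∑ p : Fin n, ∑ q : Fin n, (hessian Φ x)⁻¹ p q * A p * B q
        = ∑ p : Fin n, ∑ q : Fin n, (hessian Φ x)⁻¹ p q * B p * A q := by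
    intro x hx A B
    rw [Finset.sum_comm]
    refine Finset.sum_congr rfl fun p _ => Finset.sum_congr rfl fun q _ => ?_
    rw [hH x hx q p]; ring
  constructor
  · intro hR x hx i j k l
    have hdet : IsUnit (hessian Φ x).det :=
      isUnit_iff_ne_zero.2 (hpos x hx).det_pos.ne'
    have hGH : ∀ b a' : Fin n, (∑ m' : Fin n, hessian Φ x b m' * (hessian Φ x)⁻¹ m' a')
        = if b = a' then 1 else 0 := by
      intro b a'
      have h1 := Matrix.mul_nonsing_inv (hessian Φ x) hdet
      have h2 := congrFun (congrFun h1 b) a'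
      rwa [Matrix.mul_apply, Matrix.one_apply] at h2
    have step : ∀ D : Fin n → ℝ,
        (∀ m : Fin n, (∑ a : Fin n, (hessian Φ x)⁻¹ m a * D a) = 0) → ∀ b, D b = 0 := by
      intro D hz b
      have e1 : D b = ∑ a : Fin n, (if b = a then 1 else 0) * D a := by simp
      rw [e1]
      calc ∑ a : Fin n, (if b = a then 1 else 0) * D a
          = ∑ a : Fin n, (∑ m' : Fin n, hessian Φ x b m' * (hessian Φ x)⁻¹ m' a) * D a :=
            Finset.sum_congr rfl fun a _ => by rw [hGH b a]
        _ = ∑ a : Fin n, ∑ m' : Fin n, hessian Φ x b m' * (hessian Φ x)⁻¹ m' a * D a :=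
            Finset.sum_congr rfl fun a _ => Finset.sum_mul _ _ _
        _ = ∑ m' : Fin n, ∑ a : Fin n, hessian Φ x b m' * (hessian Φ x)⁻¹ m' a * D a :=
            Finset.sum_comm
        _ = ∑ m' : Fin n, hessian Φ x b m' * ∑ a : Fin n, (hessian Φ x)⁻¹ m' a * D a := by
            refine Finset.sum_congr rfl fun m' _ => ?_
            rw [Finset.mul_sum]
            exact Finset.sum_congr rfl fun a _ => by ring
        _ = 0 := by simp [hz]
    have hz : ∀ m : Fin n, (∑ a : Fin n, (hessian Φ x)⁻¹ m a *
        ((∑ p : Fin n, ∑ q : Fin n,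
            (hessian Φ x)⁻¹ p q * pd3 Φ j k p x * pd3 Φ a l q x)
          - (∑ p : Fin n, ∑ q : Fin n,
            (hessian Φ x)⁻¹ p q * pd3 Φ j l p x * pd3 Φ a k q x))) = 0 := by
      intro m
      have h0 := hR x hx m j k l
      rw [WDVVAux.riemann_eq hΩ hΦ hx (hpos x hx) m j k l] at h0
      linarith [h0]
    have hUV : (∑ p : Fin n, ∑ q : Fin n,
          (hessian Φ x)⁻¹ p q * pd3 Φ j k p x * pd3 Φ i l q x)
        - (∑ p : Fin n, ∑ q : Fin n,
          (hessian Φ x)⁻¹ p q * pd3 Φ j l p x * pd3 Φ i k q x) = 0 :=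
      step (fun a =>
        (∑ p : Fin n, ∑ q : Fin n,
          (hessian Φ x)⁻¹ p q * pd3 Φ j k p x * pd3 Φ a l q x)
        - (∑ p : Fin n, ∑ q : Fin n,
          (hessian Φ x)⁻¹ p q * pd3 Φ j l p x * pd3 Φ a k q x)) hz i
    have hgoal2 : (∑ p : Fin n, ∑ q : Fin n,
        (hessian Φ x)⁻¹ p q * pd3 Φ i l p x * pd3 Φ j k q x)
        = ∑ p : Fin n, ∑ q : Fin n,
          (hessian Φ x)⁻¹ p q * pd3 Φ j k p x * pd3 Φ i l q x :=
      hswap x hx (fun p => pd3 Φ i l p x) (fun q => pd3 Φ j k q x)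
    rw [hgoal2]
    linarith [hUV]
  · intro hW x hx m j k l
    rw [WDVVAux.riemann_eq hΩ hΦ hx (hpos x hx) m j k l]
    have hz : ∀ a : Fin n,
        ((∑ p : Fin n, ∑ q : Fin n,
            (hessian Φ x)⁻¹ p q * pd3 Φ j k p x * pd3 Φ a l q x)
          - (∑ p : Fin n, ∑ q : Fin n,
            (hessian Φ x)⁻¹ p q * pd3 Φ j l p x * pd3 Φ a k q x)) = 0 := by
      intro a
      rw [sub_eq_zero]
      calc (∑ p : Fin n, ∑ q : Fin n,
            (hessian Φ x)⁻¹ p q * pd3 Φ j k p x * pd3 Φ a l q x)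
          = ∑ p : Fin n, ∑ q : Fin n,
            (hessian Φ x)⁻¹ p q * pd3 Φ a l p x * pd3 Φ j k q x :=
            hswap x hx (fun p => pd3 Φ j k p x) (fun q => pd3 Φ a l q x)
        _ = ∑ p : Fin n, ∑ q : Fin n,
            (hessian Φ x)⁻¹ p q * pd3 Φ j l p x * pd3 Φ a k q x :=
            (hW x hx a j k l).symm
    rw [Finset.sum_congr rfl fun a (_ : a ∈ Finset.univ) => by rw [hz a, mul_zero]]
    simp
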